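/- arXiv:1805.01622 — 2 statements merged into one kernel-verified Lean document; each statement's English description precedes it below -/
import Mathlib

section
/- Let Φ : Δ₀ → ℚ be an additive, Γ₀(N)-invariant map and fix x₀ ∈ ℙ¹(ℚ). Then the homomorphism γ ↦ Φ([γ⁻¹·x₀] − [x₀]) is identically zero on Γ₀(N) if and only if Φ extends to an additive, Γ₀(N)-invariant map Δ → ℚ (i.e., there exists an additive Ψ : Δ → ℚ with Ψ(γ·d) = Ψ(d) for all γ ∈ Γ₀(N), d ∈ Δ, whose restriction to Δ₀ is Φ). -/
/-! Setup: `Γ₀(N) ≤ SL(2, ℤ)` acts on `ℙ¹(ℚ)`; `Δ = ℤ[ℙ¹(ℚ)]`, `Δ₀` the degree-zero divisors. -/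

noncomputable section

/-- The projective line over `ℚ`, i.e. the projectivization of `ℚ²`. -/
abbrev P1 : Type := Projectivization ℚ (Fin 2 → ℚ)

/-- The action of `SL(2, ℤ)` on `ℙ¹(ℚ)`, via the linear action of `SL(2, ℚ)` on `ℚ²`. -/
def smulP1 (g : Matrix.SpecialLinearGroup (Fin 2) ℤ) (x : P1) : P1 :=
  Projectivization.map
    ((Matrix.SpecialLinearGroup.toLin'
        (Matrix.SpecialLinearGroup.map (Int.castRingHom ℚ) g)) : (Fin 2 → ℚ) →ₗ[ℚ] (Fin 2 → ℚ))
    (LinearEquiv.injective _) x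

/-- The degree of a divisor on `ℙ¹(ℚ)`: the sum of its coefficients. -/
def degMap : (P1 →₀ ℤ) →+ ℤ := Finsupp.liftAddHom fun _ => AddMonoidHom.id ℤ

/-- `Δ₀`: the subgroup of divisors of degree `0`. -/
def Delta0 : AddSubgroup (P1 →₀ ℤ) := degMap.ker

lemma degMap_mapDomain (f : P1 → P1) (d : P1 →₀ ℤ) :
    degMap (Finsupp.mapDomain f d) = degMap d := by
  classical
  simp only [degMap, Finsupp.liftAddHom_apply]
  exact Finsupp.sum_mapDomain_index_addMonoidHom (h := fun _ => AddMonoidHom.id ℤ)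

/-- The action of `SL(2, ℤ)` on degree-zero divisors on `ℙ¹(ℚ)`. -/
def smulDelta0 (g : Matrix.SpecialLinearGroup (Fin 2) ℤ) (d : ↥Delta0) : ↥Delta0 :=
  ⟨Finsupp.mapDomain (smulP1 g) d.1, by
    have hd := d.2
    simp only [Delta0, AddMonoidHom.mem_ker] at hd ⊢
    rw [degMap_mapDomain]
    exact hd⟩

/-- The degree-zero divisor `[a] - [b]`. -/
def divOf (a b : P1) : ↥Delta0 :=
  ⟨Finsupp.single a 1 - Finsupp.single b 1, by
    simp only [Delta0, AddMonoidHom.mem_ker]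
    rw [map_sub]
    simp [degMap, Finsupp.liftAddHom_apply_single]⟩

/-!
Composing `Φ` with the retraction `d ↦ d - deg d • [x₀]` of `Δ` onto `Δ₀` extends it to `Δ`. The
retraction commutes with `γ` up to `deg d • ([γ·x₀] - [x₀])`, so the extension is invariant as soon
as `Φ([γ·x₀] - [x₀]) = 0` for every `γ` in the group, which is the vanishing of the cocycle at `γ⁻¹`.
Conversely, an invariant extension `Ψ` gives `Φ([γ⁻¹·x₀] - [x₀]) = Ψ[γ⁻¹·x₀] - Ψ[x₀] = 0`.
-/

open Matrix

lemma smulP1_one (x : P1) : smulP1 1 x = x := by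
  simp only [smulP1, map_one]
  exact congrFun (Projectivization.map_id (K := ℚ) (V := Fin 2 → ℚ)) x

lemma smulP1_mul (g h : SpecialLinearGroup (Fin 2) ℤ) (x : P1) :
    smulP1 (g * h) x = smulP1 g (smulP1 h x) := by
  simp only [smulP1, map_mul]
  exact congrFun
    (Projectivization.map_comp _ (LinearEquiv.injective _) _ (LinearEquiv.injective _)) x

lemma smulP1_smulP1_inv (g : SpecialLinearGroup (Fin 2) ℤ) (x : P1) :
    smulP1 g (smulP1 g⁻¹ x) = x := by
  rw [← smulP1_mul, mul_inv_cancel, smulP1_one]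

lemma degMap_single (x : P1) (n : ℤ) : degMap (Finsupp.single x n) = n := by
  simp [degMap]

def retractDelta0 (x₀ : P1) : (P1 →₀ ℤ) →+ ↥Delta0 :=
  AddMonoidHom.mk' (fun d => ⟨d - degMap d • Finsupp.single x₀ 1, by simp [Delta0, degMap_single]⟩)
    fun a b => by
      ext1
      simp only [map_add, add_smul, AddSubgroup.coe_add]
      abel

lemma coe_retractDelta0 (x₀ : P1) (d : P1 →₀ ℤ) :
    (retractDelta0 x₀ d : P1 →₀ ℤ) = d - degMap d • Finsupp.single x₀ 1 :=
  rfl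

lemma retractDelta0_coe (x₀ : P1) (d : ↥Delta0) : retractDelta0 x₀ d = d := by
  ext1
  rw [coe_retractDelta0, show degMap d = 0 from d.2, zero_smul, sub_zero]

lemma retractDelta0_mapDomain_smulP1 (x₀ : P1) (g : SpecialLinearGroup (Fin 2) ℤ)
    (d : P1 →₀ ℤ) :
    retractDelta0 x₀ (Finsupp.mapDomain (smulP1 g) d) =
      smulDelta0 g (retractDelta0 x₀ d) + degMap d • divOf (smulP1 g x₀) x₀ := by
  ext1
  change _ = Finsupp.mapDomain.addMonoidHom (smulP1 g) (d - degMap d • Finsupp.single x₀ 1) +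
    degMap d • (Finsupp.single (smulP1 g x₀) 1 - Finsupp.single x₀ 1)
  rw [coe_retractDelta0, degMap_mapDomain, map_sub, map_zsmul,
    Finsupp.mapDomain.addMonoidHom_apply, Finsupp.mapDomain.addMonoidHom_apply,
    Finsupp.mapDomain_single, smul_sub]
  abel

section

variable {M : Type*} [AddCommGroup M]

lemma map_retractDelta0_mapDomain_smulP1 (Φ : ↥Delta0 →+ M) (x₀ : P1)
    (g : SpecialLinearGroup (Fin 2) ℤ) (hΦ : ∀ d, Φ (smulDelta0 g d) = Φ d)
    (hx₀ : Φ (divOf (smulP1 g x₀) x₀) = 0) (d : P1 →₀ ℤ) :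
    Φ (retractDelta0 x₀ (Finsupp.mapDomain (smulP1 g) d)) = Φ (retractDelta0 x₀ d) := by
  rw [retractDelta0_mapDomain_smulP1, map_add, map_zsmul, hΦ, hx₀, smul_zero, add_zero]

lemma map_divOf_smulP1_inv (Ψ : (P1 →₀ ℤ) →+ M) (g : SpecialLinearGroup (Fin 2) ℤ)
    (hΨ : ∀ d, Ψ (Finsupp.mapDomain (smulP1 g) d) = Ψ d) (x : P1) :
    Ψ (divOf (smulP1 g⁻¹ x) x) = 0 := by
  have hx := hΨ (Finsupp.single (smulP1 g⁻¹ x) 1)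
  rw [Finsupp.mapDomain_single, smulP1_smulP1_inv] at hx
  change Ψ (Finsupp.single _ 1 - Finsupp.single x 1) = 0
  rw [map_sub, hx, sub_self]

end

theorem modularSymbol_cocycle_zero_iff_extends_general (N : ℕ) (Φ : ↥Delta0 →+ ℚ)
    (hΦ : ∀ γ ∈ CongruenceSubgroup.Gamma0 N, ∀ d : ↥Delta0, Φ (smulDelta0 γ d) = Φ d)
    (x₀ : P1) :
    (∀ γ ∈ CongruenceSubgroup.Gamma0 N, Φ (divOf (smulP1 γ⁻¹ x₀) x₀) = 0) ↔
      ∃ Ψ : (P1 →₀ ℤ) →+ ℚ,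
        (∀ γ ∈ CongruenceSubgroup.Gamma0 N, ∀ d : P1 →₀ ℤ,
          Ψ (Finsupp.mapDomain (smulP1 γ) d) = Ψ d) ∧
        (∀ d : ↥Delta0, Ψ d.1 = Φ d) := by
  constructor
  · intro hcocycle
    refine ⟨Φ.comp (retractDelta0 x₀), fun γ hγ d => ?_, fun d => ?_⟩
    · have hx₀ := hcocycle γ⁻¹ (inv_mem hγ)
      rw [inv_inv] at hx₀
      exact map_retractDelta0_mapDomain_smulP1 Φ x₀ γ (hΦ γ hγ) hx₀ d
    · rw [AddMonoidHom.comp_apply, retractDelta0_coe]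
  · rintro ⟨Ψ, hΨ, hΨΦ⟩ γ hγ
    rw [← hΨΦ]
    exact map_divOf_smulP1_inv Ψ γ (hΨ γ hγ) x₀

/-- the homomorphism `γ ↦ Φ([γ⁻¹·x₀] - [x₀])` vanishes identically on `Γ₀(N)`
if and only if `Φ` extends to an additive, `Γ₀(N)`-invariant map `Δ → ℚ`. -/
theorem modularSymbol_cocycle_zero_iff_extends (N : ℕ) (hN : 0 < N) (Φ : ↥Delta0 →+ ℚ)
    (hΦ : ∀ γ ∈ CongruenceSubgroup.Gamma0 N, ∀ d : ↥Delta0, Φ (smulDelta0 γ d) = Φ d)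
    (x₀ : P1) :
    (∀ γ ∈ CongruenceSubgroup.Gamma0 N, Φ (divOf (smulP1 γ⁻¹ x₀) x₀) = 0) ↔
      ∃ Ψ : (P1 →₀ ℤ) →+ ℚ,
        (∀ γ ∈ CongruenceSubgroup.Gamma0 N, ∀ d : P1 →₀ ℤ,
          Ψ (Finsupp.mapDomain (smulP1 γ) d) = Ψ d) ∧
        (∀ d : ↥Delta0, Ψ d.1 = Φ d) :=
  modularSymbol_cocycle_zero_iff_extends_general N Φ hΦ x₀
end
end

section
/- Let Λ ⊂ ℂ be a discrete subgroup spanning ℂ over ℝ that is stable under complex conjugation, let Ω⁺ > 0 be the positive real generator of Λ ∩ ℝ and Ω⁻ the purely imaginary generator of Λ ∩ iℝ with Im(Ω⁻) > 0. Then Ω⁺ · Im(Ω⁻) = t · covol(Λ), where t ∈ {1,2} is the index of ℤΩ⁺ + ℤΩ⁻ in Λ and covol(Λ) is the covolume of Λ with respect to the Lebesgue measure on ℂ ≅ ℝ² (the area of a fundamental parallelogram of Λ). -/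
/-! The periods span the sublattice `ℤΩ⁺ + ℤΩ⁻` of index `t` in `Λ`, so its covolume is
`t · covol(Λ)`. On the other hand its fundamental parallelogram is the rectangle with sides
`Ω⁺` and `Im Ω⁻`, whose area is the determinant of `(Ω⁺, Ω⁻)` in the orthonormal basis `(1, i)`. -/

open MeasureTheory Module Submodule ZSpan

namespace Module.Basis

variable {ι R M : Type*} [Fintype ι] [DecidableEq ι] [CommRing R] [AddCommGroup M] [Module R M]

noncomputable def ofIsUnitDet (b₀ : Basis ι R M) {v : ι → M} (h : IsUnit (b₀.det v)) :
    Basis ι R M :=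
  Basis.mk (b₀.is_basis_iff_det.mpr h).1 (b₀.is_basis_iff_det.mpr h).2.ge

@[simp]
theorem coe_ofIsUnitDet (b₀ : Basis ι R M) {v : ι → M} (h : IsUnit (b₀.det v)) :
    ⇑(b₀.ofIsUnitDet h) = v :=
  Basis.coe_mk _ _

end Module.Basis

section InnerProductSpace

variable {ι E : Type*} [Fintype ι] [NormedAddCommGroup E] [InnerProductSpace ℝ E]
  [MeasurableSpace E] [BorelSpace E] [FiniteDimensional ℝ E]

theorem OrthonormalBasis.volume_fundamentalDomain (b : OrthonormalBasis ι ℝ E) :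
    volume (fundamentalDomain b.toBasis) = 1 := by
  rw [measure_congr (fundamentalDomain_ae_parallelepiped b.toBasis volume), b.coe_toBasis,
    b.volume_parallelepiped]

theorem ZLattice.covolume_span_eq_abs_det [DecidableEq ι] (b₀ : OrthonormalBasis ι ℝ E)
    (b : Basis ι ℝ E) : ZLattice.covolume (span ℤ (Set.range b)) = |b₀.toBasis.det b| := by
  rw [ZLattice.covolume_eq_measure_fundamentalDomain _ _ (ZSpan.isAddFundamentalDomain b volume),
    measureReal_fundamentalDomain b volume b₀.toBasis, measureReal_def,
    b₀.volume_fundamentalDomain, ENNReal.toReal_one, mul_one]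

end InnerProductSpace

theorem Complex.basisOneI_det_fin_two (w z : ℂ) :
    Complex.basisOneI.det ![w, z] = w.re * z.im - z.re * w.im := by
  simp [Basis.det_apply, Matrix.det_fin_two, Basis.toMatrix_apply]

theorem omega_mul_omega_eq_index_mul_covolume_general
    (Λ : Submodule ℤ ℂ) [DiscreteTopology ↥Λ] [IsZLattice ℝ Λ]
    (Ωp : ℝ) (hΩp : 0 < Ωp)
    (hp : ∀ z : ℂ, (z ∈ Λ ∧ z.im = 0) ↔ ∃ n : ℤ, z = (n : ℂ) * (Ωp : ℂ))
    (Ωm : ℂ) (hre : Ωm.re = 0) (him : 0 < Ωm.im)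
    (hm : ∀ z : ℂ, (z ∈ Λ ∧ z.re = 0) ↔ ∃ n : ℤ, z = (n : ℂ) * Ωm)
    (t : ℕ)
    (ht : (AddSubgroup.closure {(Ωp : ℂ), Ωm}).relIndex Λ.toAddSubgroup = t) :
    Ωp * Ωm.im = t * ZLattice.covolume Λ volume := by
  have hΩpΛ : (Ωp : ℂ) ∈ Λ := ((hp Ωp).mpr ⟨1, by simp⟩).1
  have hΩmΛ : Ωm ∈ Λ := ((hm Ωm).mpr ⟨1, by simp⟩).1
  have hdet : Complex.basisOneI.det ![(Ωp : ℂ), Ωm] = Ωp * Ωm.im := by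
    simp [Complex.basisOneI_det_fin_two, hre]
  let b := Complex.basisOneI.ofIsUnitDet (v := ![(Ωp : ℂ), Ωm])
    (hdet ▸ isUnit_iff_ne_zero.mpr (by positivity))
  have hrange : Set.range b = {(Ωp : ℂ), Ωm} := by
    rw [Basis.coe_ofIsUnitDet, Matrix.range_cons_cons_empty]
  have hle : span ℤ (Set.range b) ≤ Λ := by
    rw [span_le, hrange, Set.insert_subset_iff, Set.singleton_subset_iff]
    exact ⟨hΩpΛ, hΩmΛ⟩
  have hcovolume : ZLattice.covolume (span ℤ (Set.range b)) = Ωp * Ωm.im := by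
    rw [ZLattice.covolume_span_eq_abs_det Complex.orthonormalBasisOneI,
      Complex.toBasis_orthonormalBasisOneI, Basis.coe_ofIsUnitDet, hdet,
      abs_of_pos (by positivity)]
  have hindex := ZLattice.covolume_div_covolume_eq_relIndex' _ Λ hle
  rw [hcovolume, span_int_eq_addSubgroupClosure, hrange, ht,
    div_eq_iff (ZLattice.covolume_ne_zero Λ volume)] at hindex
  exact hindex

/-- for a discrete, conjugation-stable lattice `Λ ⊂ ℂ` spanning `ℂ` over `ℝ`,
with `Ω⁺` the positive real generator of `Λ ∩ ℝ` and `Ω⁻` the purely imaginary generator of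
`Λ ∩ iℝ` with positive imaginary part, one has `Ω⁺ · Im(Ω⁻) = t · covol(Λ)`, where
`t ∈ {1, 2}` is the index of `ℤΩ⁺ + ℤΩ⁻` in `Λ` and `covol(Λ)` is the covolume of `Λ` for
the Lebesgue measure on `ℂ`. -/
theorem omega_mul_omega_eq_index_mul_covolume
    (Λ : Submodule ℤ ℂ) [DiscreteTopology ↥Λ] [IsZLattice ℝ Λ]
    (hconj : ∀ z ∈ Λ, (starRingEnd ℂ) z ∈ Λ)
    (Ωp : ℝ) (hΩp : 0 < Ωp)
    (hp : ∀ z : ℂ, (z ∈ Λ ∧ z.im = 0) ↔ ∃ n : ℤ, z = (n : ℂ) * (Ωp : ℂ))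
    (Ωm : ℂ) (hre : Ωm.re = 0) (him : 0 < Ωm.im)
    (hm : ∀ z : ℂ, (z ∈ Λ ∧ z.re = 0) ↔ ∃ n : ℤ, z = (n : ℂ) * Ωm)
    (t : ℕ)
    (ht : (AddSubgroup.closure {(Ωp : ℂ), Ωm}).relIndex Λ.toAddSubgroup = t)
    (ht12 : t = 1 ∨ t = 2) :
    Ωp * Ωm.im = t * ZLattice.covolume Λ volume :=
  omega_mul_omega_eq_index_mul_covolume_general Λ Ωp hΩp hp Ωm hre him hm t ht
end
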